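/- Let H₁ and H₂ be labelled balanced bipartite graphs, let t₁ be an even positive integer and t₂ an odd positive integer, and let X₁ ⊆ A₁, X₂ ⊆ A₂ and Y₂ ⊆ B₂. Suppose that between every two vertices of X₁ there is a walk with exactly t₁ edges in H₁, and between every vertex of X₂ and every vertex of Y₂ there is a walk with exactly t₂ edges in H₂. Set Y₁ = {b¹_i : a¹_i ∈ X₁}. Then between every vertex of X₁ × X₂ ⊆ A₁ × A₂ and every vertex of Y₁ × Y₂ ⊆ B₁ × B₂ there is a walk with exactly t₁ + t₂ edges in H₁ ⋈ H₂ (in particular, any two such vertices are joined by a path with at most t₁ + t₂ edges). -/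

import Mathlib

/-- A graph on a sum type is (balanced) bipartite with the two summands as parts:
every edge joins a left vertex to a right vertex. -/
def IsBipSum {α β : Type*} (H : SimpleGraph (α ⊕ β)) : Prop :=
  (∀ i j, ¬ H.Adj (Sum.inl i) (Sum.inl j)) ∧ (∀ i j, ¬ H.Adj (Sum.inr i) (Sum.inr j))

/-- The labelling of a labelled balanced bipartite graph is a matching ordering:
`a_i b_i` is an edge for every `i`. -/
def MatchingOrd {n : ℕ} (H : SimpleGraph (Fin n ⊕ Fin n)) : Prop :=
  ∀ i : Fin n, H.Adj (Sum.inl i) (Sum.inr i)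

/-- The labelling of a labelled balanced bipartite graph is a comatching ordering:
`a_i b_i` is not an edge for any `i`. -/
def ComatchingOrd {n : ℕ} (H : SimpleGraph (Fin n ⊕ Fin n)) : Prop :=
  ∀ i : Fin n, ¬ H.Adj (Sum.inl i) (Sum.inr i)

/-- The balanced bipartite product `H₁ ⋈ H₂` of two labelled balanced bipartite graphs:
the vertex set is `(A₁ × A₂) ⊕ (B₁ × B₂)`, with `(a¹_i, a²_j)` adjacent to `(b¹_k, b²_l)`
iff `i = k` and `a²_j b²_l ∈ E₂`, or `j = l` and `a¹_i b¹_k ∈ E₁`. -/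
def bbProd {n₁ n₂ : ℕ} (H₁ : SimpleGraph (Fin n₁ ⊕ Fin n₁))
    (H₂ : SimpleGraph (Fin n₂ ⊕ Fin n₂)) :
    SimpleGraph ((Fin n₁ × Fin n₂) ⊕ (Fin n₁ × Fin n₂)) where
  Adj x y :=
    match x, y with
    | Sum.inl (i, j), Sum.inr (k, l) =>
        (i = k ∧ H₂.Adj (Sum.inl j) (Sum.inr l)) ∨ (j = l ∧ H₁.Adj (Sum.inl i) (Sum.inr k))
    | Sum.inr (k, l), Sum.inl (i, j) =>
        (i = k ∧ H₂.Adj (Sum.inl j) (Sum.inr l)) ∨ (j = l ∧ H₁.Adj (Sum.inl i) (Sum.inr k))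
    | _, _ => False
  symm := ⟨by
    rintro (⟨i, j⟩ | ⟨i, j⟩) (⟨k, l⟩ | ⟨k, l⟩) h <;> exact h⟩
  loopless := ⟨by
    rintro (⟨i, j⟩ | ⟨i, j⟩) h <;> exact h⟩

/-!
Walks in `H₁` at a fixed second coordinate and walks in `H₂` at a fixed first coordinate
are walks in `H₁ ⋈ H₂`. Concatenating the copy of a `t₁`-walk from `a¹_i` to `a¹_{i'}`
(second coordinate `j`) with the copy of a `t₂`-walk from `a²_j` to `b²_l` (first coordinate
`i'`) joins `(a¹_i, a²_j)` to `(b¹_{i'}, b²_l)` in exactly `t₁ + t₂` steps.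
-/

namespace bbProd

variable {n₁ n₂ : ℕ} {H₁ : SimpleGraph (Fin n₁ ⊕ Fin n₁)} {H₂ : SimpleGraph (Fin n₂ ⊕ Fin n₂)}

def leftHom (H₂ : SimpleGraph (Fin n₂ ⊕ Fin n₂)) (hb₁ : IsBipSum H₁) (j : Fin n₂) :
    H₁ →g bbProd H₁ H₂ where
  toFun := Sum.elim (fun a => Sum.inl (a, j)) (fun b => Sum.inr (b, j))
  map_rel' := by
    rintro (a | a) (b | b) h
    · exact absurd h (hb₁.1 a b)
    · exact Or.inr ⟨rfl, h⟩
    · exact Or.inr ⟨rfl, h.symm⟩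
    · exact absurd h (hb₁.2 a b)

def rightHom (H₁ : SimpleGraph (Fin n₁ ⊕ Fin n₁)) (hb₂ : IsBipSum H₂) (i : Fin n₁) :
    H₂ →g bbProd H₁ H₂ where
  toFun := Sum.elim (fun c => Sum.inl (i, c)) (fun d => Sum.inr (i, d))
  map_rel' := by
    rintro (c | c) (d | d) h
    · exact absurd h (hb₂.1 c d)
    · exact Or.inl ⟨rfl, h⟩
    · exact Or.inl ⟨rfl, h.symm⟩
    · exact absurd h (hb₂.2 c d)

lemma leftHom_inl (hb₁ : IsBipSum H₁) (j : Fin n₂) (a : Fin n₁) :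
    leftHom H₂ hb₁ j (Sum.inl a) = Sum.inl (a, j) := rfl

lemma rightHom_inl (hb₂ : IsBipSum H₂) (i : Fin n₁) (c : Fin n₂) :
    rightHom H₁ hb₂ i (Sum.inl c) = Sum.inl (i, c) := rfl

lemma rightHom_inr (hb₂ : IsBipSum H₂) (i : Fin n₁) (d : Fin n₂) :
    rightHom H₁ hb₂ i (Sum.inr d) = Sum.inr (i, d) := rfl

def walkLeft (H₂ : SimpleGraph (Fin n₂ ⊕ Fin n₂)) (hb₁ : IsBipSum H₁) (j : Fin n₂)
    {i i' : Fin n₁} (p : H₁.Walk (Sum.inl i) (Sum.inl i')) :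
    (bbProd H₁ H₂).Walk (Sum.inl (i, j)) (Sum.inl (i', j)) :=
  (p.map (leftHom H₂ hb₁ j)).copy (leftHom_inl ..) (leftHom_inl ..)

def walkRight (H₁ : SimpleGraph (Fin n₁ ⊕ Fin n₁)) (hb₂ : IsBipSum H₂) (i : Fin n₁)
    {j l : Fin n₂} (q : H₂.Walk (Sum.inl j) (Sum.inr l)) :
    (bbProd H₁ H₂).Walk (Sum.inl (i, j)) (Sum.inr (i, l)) :=
  (q.map (rightHom H₁ hb₂ i)).copy (rightHom_inl ..) (rightHom_inr ..)

@[simp]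
lemma length_walkLeft (hb₁ : IsBipSum H₁) (j : Fin n₂) {i i' : Fin n₁}
    (p : H₁.Walk (Sum.inl i) (Sum.inl i')) : (walkLeft H₂ hb₁ j p).length = p.length := by
  simp [walkLeft]

@[simp]
lemma length_walkRight (hb₂ : IsBipSum H₂) (i : Fin n₁) {j l : Fin n₂}
    (q : H₂.Walk (Sum.inl j) (Sum.inr l)) : (walkRight H₁ hb₂ i q).length = q.length := by
  simp [walkRight]

end bbProd

theorem bbProd_walk_even_odd_general {n₁ n₂ : ℕ}
    (H₁ : SimpleGraph (Fin n₁ ⊕ Fin n₁)) (H₂ : SimpleGraph (Fin n₂ ⊕ Fin n₂))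
    (hb₁ : IsBipSum H₁) (hb₂ : IsBipSum H₂)
    (t₁ t₂ : ℕ)
    (X₁ : Set (Fin n₁)) (X₂ : Set (Fin n₂)) (Y₂ : Set (Fin n₂))
    (h₁ : ∀ i ∈ X₁, ∀ i' ∈ X₁,
      ∃ p : H₁.Walk (Sum.inl i) (Sum.inl i'), p.length = t₁)
    (h₂ : ∀ j ∈ X₂, ∀ l ∈ Y₂,
      ∃ p : H₂.Walk (Sum.inl j) (Sum.inr l), p.length = t₂) :
    ∀ i ∈ X₁, ∀ j ∈ X₂, ∀ i' ∈ X₁, ∀ l ∈ Y₂,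
      ∃ q : (bbProd H₁ H₂).Walk (Sum.inl (i, j)) (Sum.inr (i', l)),
        q.length = t₁ + t₂ := by
  intro i hi j hj i' hi' l hl
  obtain ⟨p, rfl⟩ := h₁ i hi i' hi'
  obtain ⟨q, rfl⟩ := h₂ j hj l hl
  exact ⟨(bbProd.walkLeft H₂ hb₁ j p).append (bbProd.walkRight H₁ hb₂ i' q), by simp⟩

/-- Proposition 8(2): if every two vertices of `X₁ ⊆ A₁` are joined by a walk with
exactly `t₁` edges (`t₁` even) and every vertex of `X₂ ⊆ A₂` is joined to every vertex
of `Y₂ ⊆ B₂` by a walk with exactly `t₂` edges (`t₂` odd), then, with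
`Y₁ = {b¹_i : a¹_i ∈ X₁}`, every vertex of `X₁ × X₂ ⊆ A₁ × A₂` is joined to every
vertex of `Y₁ × Y₂ ⊆ B₁ × B₂` by a walk with exactly `t₁ + t₂` edges in `H₁ ⋈ H₂`. -/
theorem bbProd_walk_even_odd {n₁ n₂ : ℕ}
    (H₁ : SimpleGraph (Fin n₁ ⊕ Fin n₁)) (H₂ : SimpleGraph (Fin n₂ ⊕ Fin n₂))
    (hb₁ : IsBipSum H₁) (hb₂ : IsBipSum H₂)
    (t₁ t₂ : ℕ) (ht₁pos : 0 < t₁) (ht₂pos : 0 < t₂) (ht₁ : Even t₁) (ht₂ : Odd t₂)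
    (X₁ : Set (Fin n₁)) (X₂ : Set (Fin n₂)) (Y₂ : Set (Fin n₂))
    (h₁ : ∀ i ∈ X₁, ∀ i' ∈ X₁,
      ∃ p : H₁.Walk (Sum.inl i) (Sum.inl i'), p.length = t₁)
    (h₂ : ∀ j ∈ X₂, ∀ l ∈ Y₂,
      ∃ p : H₂.Walk (Sum.inl j) (Sum.inr l), p.length = t₂) :
    ∀ i ∈ X₁, ∀ j ∈ X₂, ∀ i' ∈ X₁, ∀ l ∈ Y₂,
      ∃ q : (bbProd H₁ H₂).Walk (Sum.inl (i, j)) (Sum.inr (i', l)),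
        q.length = t₁ + t₂ :=
  bbProd_walk_even_odd_general H₁ H₂ hb₁ hb₂ t₁ t₂ X₁ X₂ Y₂ h₁ h₂
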